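/- Let M₁(a) denote the number of pairs (n,k) of positive integers with 1 ≤ k ≤ n such that the unsigned Stirling number of the first kind c(n,k) equals a. Then, as a → ∞, M₁(a) = O( log a / (log log a − log log log a) ). -/

import Mathlib

/-!
If `c(n, k) = a ≥ 2` with `1 ≤ k ≤ n`, then `d = n - k ≥ 1`, and for fixed `d` the numbers
`c(k + d, k)` are strictly increasing in `k`; so each `d` occurs for at most one pair, and
`a ≥ c(1 + d, 1) = d!`. Hence `M₁(a)` is at most the number of `d ≥ 1` with `d! ≤ a`.
Since `(d/2)^(d/2) ≤ d!`, such `d` satisfy `x log x ≤ log a` for `x = d/2`, which forces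
`x ≤ 2 log a / (log log a - log log log a)`.
-/

open Real
open scoped Nat

/-- Unsigned Stirling numbers of the first kind, defined by the standard recurrence. -/
def stirling1 : ℕ → ℕ → ℕ
  | 0, 0 => 1
  | 0, _ + 1 => 0
  | _ + 1, 0 => 0
  | n + 1, k + 1 => stirling1 n k + n * stirling1 n (k + 1)

/-- `M₁ a` is the number of pairs `(n, k)` with `1 ≤ k ≤ n` and `c(n, k) = a`. -/
noncomputable def M1 (a : ℕ) : ℕ :=
  Nat.card {p : ℕ × ℕ // 1 ≤ p.2 ∧ p.2 ≤ p.1 ∧ stirling1 p.1 p.2 = a}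

theorem stirling1_succ_succ (n k : ℕ) :
    stirling1 (n + 1) (k + 1) = stirling1 n k + n * stirling1 n (k + 1) := rfl

theorem stirling1_succ_zero (n : ℕ) : stirling1 (n + 1) 0 = 0 := rfl

theorem stirling1_eq_zero_of_lt : ∀ {n k : ℕ}, n < k → stirling1 n k = 0
  | 0, _ + 1, _ => rfl
  | n + 1, k + 1, h => by
    rw [stirling1_succ_succ, stirling1_eq_zero_of_lt (n := n) (k := k) (by omega),
      stirling1_eq_zero_of_lt (n := n) (k := k + 1) (by omega), Nat.mul_zero]

theorem stirling1_self : ∀ n : ℕ, stirling1 n n = 1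
  | 0 => rfl
  | n + 1 => by
    rw [stirling1_succ_succ, stirling1_self n, stirling1_eq_zero_of_lt (Nat.lt_succ_self n),
      Nat.mul_zero]

theorem stirling1_succ_one : ∀ n : ℕ, stirling1 (n + 1) 1 = n !
  | 0 => rfl
  | n + 1 => by
    rw [stirling1_succ_succ, stirling1_succ_zero, stirling1_succ_one n, Nat.zero_add,
      Nat.factorial_succ]

theorem stirling1_pos : ∀ {n k : ℕ}, 1 ≤ k → k ≤ n → 0 < stirling1 n k
  | 0, _, hk, hkn | _ + 1, 0, hk, hkn => by omega
  | n + 1, k + 1, _, hkn => by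
    rcases Nat.eq_or_lt_of_le hkn with hk | hk
    · rw [hk, stirling1_self]
      exact Nat.one_pos
    · rw [stirling1_succ_succ]
      have := Nat.mul_pos (by omega : 0 < n)
        (stirling1_pos (n := n) (k := k + 1) (by omega) (by omega))
      omega

theorem stirling1_add_strictMono {d : ℕ} (hd : 1 ≤ d) :
    StrictMono fun k => stirling1 (k + d) k := by
  refine strictMono_nat_of_lt_succ fun k => ?_
  show stirling1 (k + d) k < stirling1 (k + 1 + d) (k + 1)
  rw [Nat.add_right_comm, stirling1_succ_succ]
  have := Nat.mul_pos (by omega : 0 < k + d) (stirling1_pos (by omega) (by omega : k + 1 ≤ k + d))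
  omega

theorem factorial_le_stirling1 {k : ℕ} (hk : 1 ≤ k) (d : ℕ) : d ! ≤ stirling1 (k + d) k := by
  rcases Nat.eq_zero_or_pos d with rfl | hd
  · rw [Nat.add_zero, stirling1_self, Nat.factorial_zero]
  · calc d ! = stirling1 (1 + d) 1 := by rw [Nat.add_comm, stirling1_succ_one]
      _ ≤ stirling1 (k + d) k := (stirling1_add_strictMono hd).monotone hk

theorem one_le_sub_and_factorial_le_of_stirling1_eq {n k a : ℕ} (hk : 1 ≤ k) (hkn : k ≤ n)
    (ha : a ≠ 1) (h : stirling1 n k = a) : 1 ≤ n - k ∧ (n - k)! ≤ a := by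
  obtain ⟨d, rfl⟩ := Nat.exists_eq_add_of_le hkn
  rw [Nat.add_sub_cancel_left]
  refine ⟨Nat.one_le_iff_ne_zero.2 ?_, h ▸ factorial_le_stirling1 hk d⟩
  rintro rfl
  rw [Nat.add_zero, stirling1_self] at h
  exact ha h.symm

theorem M1_le_of_forall_factorial_le {a N : ℕ} (ha : a ≠ 1)
    (hN : ∀ d, 1 ≤ d → d ! ≤ a → d ≤ N) : M1 a ≤ N := by
  unfold M1
  let f : {p : ℕ × ℕ // 1 ≤ p.2 ∧ p.2 ≤ p.1 ∧ stirling1 p.1 p.2 = a} → Finset.Icc 1 N :=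
    fun p =>
      have hp := one_le_sub_and_factorial_le_of_stirling1_eq p.2.1 p.2.2.1 ha p.2.2.2
      ⟨p.1.1 - p.1.2, Finset.mem_Icc.2 ⟨hp.1, hN _ hp.1 hp.2⟩⟩
  have hf : Function.Injective f := by
    rintro ⟨⟨n₁, k₁⟩, hk₁, hkn₁, h₁⟩ ⟨⟨n₂, k₂⟩, hk₂, hkn₂, h₂⟩ hd
    dsimp only at hk₁ hkn₁ h₁ hk₂ hkn₂ h₂
    obtain ⟨d₁, rfl⟩ := Nat.exists_eq_add_of_le hkn₁
    obtain ⟨d₂, rfl⟩ := Nat.exists_eq_add_of_le hkn₂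
    simp only [f, Subtype.mk.injEq, Nat.add_sub_cancel_left] at hd h₁ h₂
    subst hd
    have hd₁ := (one_le_sub_and_factorial_le_of_stirling1_eq hk₁ hkn₁ ha h₁).1
    rw [Nat.add_sub_cancel_left] at hd₁
    obtain rfl : k₁ = k₂ := (stirling1_add_strictMono hd₁).injective (h₁.trans h₂.symm)
    rfl
  simpa only [Nat.card_eq_finsetCard, Nat.card_Icc, Nat.add_sub_cancel] using
    Nat.card_le_card_of_injective f hf

theorem pow_half_le_factorial (j : ℕ) : (j / 2) ^ (j / 2) ≤ j ! := by
  have hle : j / 2 ≤ j - j / 2 := by omega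
  calc (j / 2) ^ (j / 2) ≤ (j / 2 + 1) ^ (j - j / 2) :=
        (Nat.pow_le_pow_left (Nat.le_succ _) _).trans (Nat.pow_le_pow_right (Nat.succ_pos _) hle)
    _ ≤ (j / 2)! * (j / 2 + 1) ^ (j - j / 2) := Nat.le_mul_of_pos_left _ (Nat.factorial_pos _)
    _ ≤ (j / 2 + (j - j / 2))! := Nat.factorial_mul_pow_le_factorial
    _ = j ! := by rw [Nat.add_sub_cancel' (Nat.div_le_self j 2)]

namespace Real

variable {L : ℝ}

theorem one_le_log_sub_log_log (hL : exp 1 ≤ L) : 1 ≤ log L - log (log L) := by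
  have hlogL : 1 ≤ log L := (le_log_iff_exp_le ((exp_pos 1).trans_le hL)).2 hL
  linarith [log_le_sub_one_of_pos (zero_lt_one.trans_le hlogL)]

theorem one_le_div_log_sub_log_log (hL : exp 1 ≤ L) : 1 ≤ L / (log L - log (log L)) := by
  have hlogL : 1 ≤ log L := (le_log_iff_exp_le ((exp_pos 1).trans_le hL)).2 hL
  rw [one_le_div (by linarith [one_le_log_sub_log_log hL])]
  linarith [log_nonneg hlogL, log_le_self ((exp_pos 1).le.trans hL)]

theorem le_two_mul_div_log_sub_log_log_of_mul_log_le {x : ℝ} (hL : exp 1 ≤ L)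
    (hx : x * log x ≤ L) :
    x ≤ 2 * L / (log L - log (log L)) := by
  have hL0 : 0 < L := (exp_pos 1).trans_le hL
  have hlogL : 1 ≤ log L := (le_log_iff_exp_le hL0).2 hL
  set D := log L - log (log L)
  have hD : 1 ≤ D := one_le_log_sub_log_log hL
  set T := 2 * L / D
  have hT : 0 < T := by positivity
  have hlogD : log D ≤ log (log L) :=
    log_le_log (by linarith) (by linarith [log_nonneg hlogL])
  have hlogT : D ≤ log T := by
    rw [log_div (by positivity) (by positivity), log_mul two_ne_zero hL0.ne']
    linarith [log_nonneg one_le_two]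
  by_contra! hxT
  have : 2 * L ≤ L :=
    calc 2 * L = T * D := (div_mul_cancel₀ _ (by positivity)).symm
      _ ≤ T * log T := mul_le_mul_of_nonneg_left hlogT hT.le
      _ ≤ x * log x := mul_le_mul hxT.le (log_le_log hT hxT.le) (by linarith) (hT.trans hxT).le
      _ ≤ L := hx
  linarith

end Real

theorem natCast_le_of_factorial_le {a j : ℕ} (ha : exp 1 ≤ log a) (h : j ! ≤ a) :
    (j : ℝ) ≤ 5 * (log a / (log (log a) - log (log (log a)))) := by
  set m := j / 2
  have hpow : (m : ℝ) ^ m ≤ a := by exact_mod_cast (pow_half_le_factorial j).trans h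
  have hm : (m : ℝ) * log m ≤ log a := by
    rw [← log_pow]
    exact log_le_log (by exact_mod_cast Nat.pow_self_pos) hpow
  have hj : (j : ℝ) ≤ 2 * m + 1 := by exact_mod_cast (by omega : j ≤ 2 * m + 1)
  have hmB := le_two_mul_div_log_sub_log_log_of_mul_log_le ha hm
  rw [mul_div_assoc] at hmB
  linarith [one_le_div_log_sub_log_log ha]

/-- As `a → ∞`, `M₁(a) = O(log a / (log log a − log log log a))`. -/
theorem M1_isBigO :
    (fun a : ℕ => (M1 a : ℝ)) =O[Filter.atTop]
      fun a : ℕ =>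
        Real.log a / (Real.log (Real.log a) - Real.log (Real.log (Real.log a))) := by
  refine Asymptotics.IsBigO.of_bound 5 ?_
  have hlog : ∀ᶠ a : ℕ in Filter.atTop, exp 1 ≤ log a :=
    (tendsto_log_atTop.comp tendsto_natCast_atTop_atTop).eventually_ge_atTop (exp 1)
  filter_upwards [hlog] with a ha
  have ha₁ : a ≠ 1 := by
    rintro rfl
    rw [Nat.cast_one, log_one] at ha
    exact (exp_pos 1).not_ge ha
  have hB := zero_le_one.trans (one_le_div_log_sub_log_log ha)
  have hM := M1_le_of_forall_factorial_le ha₁ fun j _ hj =>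
    Nat.le_floor (natCast_le_of_factorial_le ha hj)
  rw [norm_natCast, norm_of_nonneg hB]
  exact (Nat.cast_le.2 hM).trans (Nat.floor_le (by positivity))
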